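/- arXiv:2403.05133 — 3 statements merged into one kernel-verified Lean document; each statement's English description precedes it below -/
import Mathlib

section
/- Let G be a connected finite simple graph on a vertex set V with at least 2 vertices, with maximum vertex degree d_max(G) and largest Laplacian eigenvalue λ_max(L(G)). Then λ_max(L(G)) = 2·d_max(G) if and only if G is regular (every vertex has degree d_max(G)) and bipartite (the vertex set can be partitioned into two sets such that every edge of G joins a vertex of one set to a vertex of the other). -/
/-!
With `L = D - A` and the signless Laplacian `Q = D + A` one has `xᵀLx = 2 xᵀDx - xᵀQx`, where
`xᵀDx ≤ d_max ‖x‖²` and `xᵀQx = ½ ∑_{i ∼ j} (x_i + x_j)² ≥ 0`; so every Laplacian eigenvalue is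
at most `2 d_max`. For an eigenvector `x` of `2 d_max` both inequalities are equalities:
`x_j = -x_i` along every edge, so `|x|` is constant on the connected graph and hence nowhere zero,
which forces every degree to be `d_max` and makes the sign of `x` a bipartition. Conversely, on a
`d`-regular bipartite graph the `±1` indicator of one side is an eigenvector of `2d`.
-/

open Matrix Finset

namespace Matrix.IsHermitian

variable {n : Type*} [Fintype n] [DecidableEq n] {A : Matrix n n ℝ}

theorem exists_eigenvalues_eq_of_mulVec_eq_smul (hA : A.IsHermitian) {μ : ℝ} {x : n → ℝ}
    (hx : A *ᵥ x = μ • x) (hx0 : x ≠ 0) : ∃ i, hA.eigenvalues i = μ := by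
  have hμ : Module.End.HasEigenvalue A.toLin' μ :=
    Module.End.hasEigenvalue_of_hasEigenvector
      ⟨Module.End.mem_eigenspace_iff.mpr (by rwa [toLin'_apply]), hx0⟩
  change μ ∈ Set.range _
  rw [← hA.spectrum_real_eq_range_eigenvalues, ← spectrum_toLin']
  exact hμ.mem_spectrum

end Matrix.IsHermitian

namespace SimpleGraph

variable {V : Type*}

theorem abs_eq_of_reachable {R : Type*} [Ring R] [LinearOrder R] {G : SimpleGraph V} {x : V → R}
    (hx : ∀ i j : V, G.Adj i j → x i = -x j) {u v : V} (huv : G.Reachable u v) :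
    |x u| = |x v| := by
  obtain ⟨w⟩ := huv
  induction w with
  | nil => rfl
  | cons hadj _ ih => rw [hx _ _ hadj, abs_neg, ih]

variable [Fintype V] (G : SimpleGraph V) [DecidableRel G.Adj]

section SignlessLaplacian

variable [DecidableEq V] (R : Type*)

def signlessLapMatrix [AddMonoidWithOne R] : Matrix V V R := G.degMatrix R + G.adjMatrix R

variable {R}

theorem lapMatrix_add_signlessLapMatrix [AddCommGroupWithOne R] :
    G.lapMatrix R + G.signlessLapMatrix R = 2 • G.degMatrix R := by
  rw [lapMatrix, signlessLapMatrix, two_nsmul]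
  abel

theorem dotProduct_signlessLapMatrix_mulVec [Field R] [CharZero R] (x : V → R) :
    x ⬝ᵥ (G.signlessLapMatrix R *ᵥ x) =
      (∑ i : V, ∑ j : V, if G.Adj i j then (x i + x j) ^ 2 else 0) / 2 := by
  have hlap := G.lapMatrix_toLinearMap₂' R x
  rw [toLinearMap₂'_apply', lapMatrix, sub_mulVec, dotProduct_sub] at hlap
  have hsq : ∀ i j, (if G.Adj i j then (x i + x j) ^ 2 else 0 : R) =
      (if G.Adj i j then (x i - x j) ^ 2 else 0) + 4 * if G.Adj i j then x i * x j else 0 := by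
    intro i j
    split_ifs <;> ring
  simp_rw [hsq, sum_add_distrib, ← mul_sum, ← dotProduct_mulVec_adjMatrix]
  rw [signlessLapMatrix, add_mulVec, dotProduct_add]
  linear_combination hlap

theorem dotProduct_signlessLapMatrix_mulVec_nonneg [Field R] [LinearOrder R]
    [IsStrictOrderedRing R] (x : V → R) : 0 ≤ x ⬝ᵥ (G.signlessLapMatrix R *ᵥ x) := by
  rw [dotProduct_signlessLapMatrix_mulVec]
  positivity

theorem dotProduct_signlessLapMatrix_mulVec_eq_zero_iff [Field R] [LinearOrder R]
    [IsStrictOrderedRing R] (x : V → R) :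
    x ⬝ᵥ (G.signlessLapMatrix R *ᵥ x) = 0 ↔ ∀ i j : V, G.Adj i j → x i = -x j := by
  simp (disch := intros; positivity)
    [dotProduct_signlessLapMatrix_mulVec, sum_eq_zero_iff_of_nonneg, eq_neg_iff_add_eq_zero]

theorem dotProduct_lapMatrix_mulVec_eq [CommRing R] (x : V → R) :
    x ⬝ᵥ (G.lapMatrix R *ᵥ x) =
      2 * (x ⬝ᵥ (G.degMatrix R *ᵥ x)) - x ⬝ᵥ (G.signlessLapMatrix R *ᵥ x) := by
  rw [eq_sub_iff_add_eq, ← dotProduct_add, ← add_mulVec, lapMatrix_add_signlessLapMatrix,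
    smul_mulVec, dotProduct_smul, nsmul_eq_mul, Nat.cast_ofNat]

end SignlessLaplacian

variable {G}

section OrderedField

variable [DecidableEq V] {R : Type*} [Field R] [LinearOrder R] [IsStrictOrderedRing R] {d : ℕ}

theorem dotProduct_degMatrix_mulVec_le (hd : ∀ v, G.degree v ≤ d) (x : V → R) :
    x ⬝ᵥ (G.degMatrix R *ᵥ x) ≤ d * (x ⬝ᵥ x) := by
  rw [dotProduct_mulVec_degMatrix, dotProduct, mul_sum]
  refine sum_le_sum fun v _ => ?_
  rw [mul_assoc]
  exact mul_le_mul_of_nonneg_right (by exact_mod_cast hd v) (mul_self_nonneg _)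

theorem le_two_mul_of_lapMatrix_mulVec_eq_smul (hd : ∀ v, G.degree v ≤ d) {μ : R} {x : V → R}
    (hx : G.lapMatrix R *ᵥ x = μ • x) (hx0 : x ≠ 0) : μ ≤ 2 * d := by
  have hpos : 0 < x ⬝ᵥ x := lt_of_le_of_ne (Fintype.sum_nonneg fun i => mul_self_nonneg (x i))
    (Ne.symm (dotProduct_self_eq_zero.not.mpr hx0))
  have hquad := dotProduct_lapMatrix_mulVec_eq G x
  rw [hx, dotProduct_smul, smul_eq_mul] at hquad
  have hdeg := dotProduct_degMatrix_mulVec_le hd x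
  have hsignless := dotProduct_signlessLapMatrix_mulVec_nonneg G x
  refine le_of_mul_le_mul_right ?_ hpos
  linarith

theorem signlessLap_form_eq_zero_and_deg_form_eq_of_lapMatrix_mulVec_eq
    (hd : ∀ v, G.degree v ≤ d) {x : V → R} (hx : G.lapMatrix R *ᵥ x = (2 * d : R) • x) :
    x ⬝ᵥ (G.signlessLapMatrix R *ᵥ x) = 0 ∧ x ⬝ᵥ (G.degMatrix R *ᵥ x) = d * (x ⬝ᵥ x) := by
  have hquad := dotProduct_lapMatrix_mulVec_eq G x
  rw [hx, dotProduct_smul, smul_eq_mul] at hquad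
  have hdeg := dotProduct_degMatrix_mulVec_le hd x
  have hsignless := dotProduct_signlessLapMatrix_mulVec_nonneg G x
  constructor <;> linarith

theorem eq_neg_of_adj_of_lapMatrix_mulVec_eq (hd : ∀ v, G.degree v ≤ d) {x : V → R}
    (hx : G.lapMatrix R *ᵥ x = (2 * d : R) • x) : ∀ i j : V, G.Adj i j → x i = -x j :=
  (dotProduct_signlessLapMatrix_mulVec_eq_zero_iff G x).mp
    (signlessLap_form_eq_zero_and_deg_form_eq_of_lapMatrix_mulVec_eq hd hx).1

theorem degree_eq_of_lapMatrix_mulVec_eq (hd : ∀ v, G.degree v ≤ d) {x : V → R}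
    (hx : G.lapMatrix R *ᵥ x = (2 * d : R) • x) {v : V} (hv : x v ≠ 0) : G.degree v = d := by
  have hsum : ∑ u, ((d : R) - G.degree u) * (x u * x u) = 0 := by
    have hdeg := (signlessLap_form_eq_zero_and_deg_form_eq_of_lapMatrix_mulVec_eq hd hx).2
    simp only [dotProduct_mulVec_degMatrix, mul_assoc] at hdeg
    rw [dotProduct, mul_sum] at hdeg
    simp only [sub_mul, sum_sub_distrib, hdeg, sub_self]
  have hterm := (sum_eq_zero_iff_of_nonneg fun u _ => mul_nonneg
    (sub_nonneg.mpr (by exact_mod_cast hd u)) (mul_self_nonneg (x u))).mp hsum v (mem_univ v)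
  rcases mul_eq_zero.mp hterm with h | h
  · exact_mod_cast (sub_eq_zero.mp h).symm
  · exact absurd (mul_self_eq_zero.mp h) hv

theorem degree_eq_and_bipartite_of_lapMatrix_mulVec_eq (hconn : G.Connected)
    (hd : ∀ v, G.degree v ≤ d) {x : V → R} (hx : G.lapMatrix R *ᵥ x = (2 * d : R) • x)
    (hx0 : x ≠ 0) :
    (∀ v, G.degree v = d) ∧
      ∃ A : Set V, ∀ u w : V, G.Adj u w → (u ∈ A ∧ w ∉ A) ∨ (u ∉ A ∧ w ∈ A) := by
  have hneg := eq_neg_of_adj_of_lapMatrix_mulVec_eq hd hx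
  obtain ⟨v₀, hv₀⟩ := Function.ne_iff.mp hx0
  have hne : ∀ v, x v ≠ 0 := fun v => by
    rw [← abs_pos, ← abs_eq_of_reachable hneg (hconn v₀ v)]
    exact abs_pos.mpr hv₀
  refine ⟨fun v => degree_eq_of_lapMatrix_mulVec_eq hd hx (hne v), {v | 0 < x v},
    fun u w huw => ?_⟩
  simp only [Set.mem_ofPred_eq, hneg u w huw, neg_pos, not_lt]
  rcases (hne w).lt_or_gt with h | h
  · exact Or.inl ⟨h, h.le⟩
  · exact Or.inr ⟨h.le, h⟩

theorem exists_lapMatrix_mulVec_eq_two_mul_smul_of_bipartite [Nonempty V]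
    (hreg : ∀ v, G.degree v = d) {A : Set V}
    (hA : ∀ u w : V, G.Adj u w → (u ∈ A ∧ w ∉ A) ∨ (u ∉ A ∧ w ∈ A)) :
    ∃ y : V → R, y ≠ 0 ∧ G.lapMatrix R *ᵥ y = (2 * d : R) • y := by
  classical
  set y : V → R := fun v => if v ∈ A then 1 else -1
  have hy : ∀ u w, G.Adj u w → y w = -y u := fun u w huw => by
    rcases hA u w huw with ⟨hu, hw⟩ | ⟨hu, hw⟩ <;> simp [y, hu, hw]
  refine ⟨y, fun h => ?_, funext fun v => ?_⟩
  · obtain ⟨v⟩ := ‹Nonempty V›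
    have hv := congrFun h v
    simp only [y, Pi.zero_apply] at hv
    split_ifs at hv <;> norm_num at hv
  · rw [lapMatrix_mulVec_apply,
      sum_congr rfl fun u hu => hy v u ((mem_neighborFinset G v u).mp hu), sum_const,
      card_neighborFinset_eq_degree, hreg, nsmul_eq_mul, Pi.smul_apply, smul_eq_mul]
    ring

end OrderedField

end SimpleGraph

theorem lapMatrix_largest_eigenvalue_eq_two_mul_maxDegree_iff_general
    {V : Type*} [Fintype V] [DecidableEq V]
    (G : SimpleGraph V) [DecidableRel G.Adj]
    (hconn : G.Connected)
    (dmax : ℕ) (hd : dmax = Finset.univ.sup (fun v => G.degree v))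
    (lammax : ℝ)
    (hlam : lammax = ⨆ i : V, (G.posSemidef_lapMatrix ℝ).1.eigenvalues i) :
    lammax = 2 * dmax ↔
      ((∀ v : V, G.degree v = dmax) ∧
        ∃ A : Set V, ∀ u w : V, G.Adj u w → ((u ∈ A ∧ w ∉ A) ∨ (u ∉ A ∧ w ∈ A))) := by
  have hH := (G.posSemidef_lapMatrix ℝ).1
  have : Nonempty V := hconn.nonempty
  have hdeg : ∀ v, G.degree v ≤ dmax := fun v => hd ▸ le_sup (f := (G.degree ·)) (mem_univ v)
  have heigvec : ∀ i, ⇑(hH.eigenvectorBasis i) ≠ 0 := fun i =>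
    (WithLp.ofLp_eq_zero 2).ne.2 (hH.eigenvectorBasis.orthonormal.ne_zero i)
  subst hlam
  constructor
  · intro h
    obtain ⟨i, hi⟩ := exists_eq_ciSup_of_finite (f := hH.eigenvalues)
    refine G.degree_eq_and_bipartite_of_lapMatrix_mulVec_eq hconn hdeg ?_ (heigvec i)
    rw [hH.mulVec_eigenvectorBasis i, hi, h]
  · rintro ⟨hreg, A, hA⟩
    obtain ⟨y, hy0, hy⟩ := G.exists_lapMatrix_mulVec_eq_two_mul_smul_of_bipartite (R := ℝ) hreg hA
    obtain ⟨i, hi⟩ := hH.exists_eigenvalues_eq_of_mulVec_eq_smul hy hy0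
    refine le_antisymm (ciSup_le fun j => ?_) (hi ▸ le_ciSup (Set.finite_range _).bddAbove i)
    exact G.le_two_mul_of_lapMatrix_mulVec_eq_smul hdeg (hH.mulVec_eigenvectorBasis j) (heigvec j)

/-- For a connected finite simple graph on at least 2 vertices, the largest Laplacian
eigenvalue equals `2·d_max` if and only if the graph is regular and bipartite. -/
theorem lapMatrix_largest_eigenvalue_eq_two_mul_maxDegree_iff
    {V : Type*} [Fintype V] [DecidableEq V]
    (G : SimpleGraph V) [DecidableRel G.Adj]
    (hV : 2 ≤ Fintype.card V) (hconn : G.Connected)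
    (dmax : ℕ) (hd : dmax = Finset.univ.sup (fun v => G.degree v))
    (lammax : ℝ)
    (hlam : lammax = ⨆ i : V, (G.posSemidef_lapMatrix ℝ).1.eigenvalues i) :
    lammax = 2 * dmax ↔
      ((∀ v : V, G.degree v = dmax) ∧
        ∃ A : Set V, ∀ u w : V, G.Adj u w → ((u ∈ A ∧ w ∉ A) ∨ (u ∉ A ∧ w ∈ A))) :=
  lapMatrix_largest_eigenvalue_eq_two_mul_maxDegree_iff_general G hconn dmax hd lammax hlam
end

section
/- Let G be a connected finite simple graph on a vertex set V with at least 2 vertices and with every vertex degree at least 1. Let ν₂ be the second smallest eigenvalue of the normalized Laplacian matrix 𝓛(G) = I − D(G)^{-1/2} A(G) D(G)^{-1/2}. Then Φ(G) ≤ √(2·ν₂), where Φ(G) is the conductance of G. -/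
/-- The volume of a vertex subset `S`: the sum of the degrees of the vertices in `S`. -/
noncomputable def graphVol {V : Type*} [Fintype V] (G : SimpleGraph V) (S : Finset V) : ℕ :=
  ∑ v ∈ S, (G.neighborSet v).ncard

/-- The boundary of a vertex subset `S`: the set of edges of `G` with exactly one
endpoint in `S`. -/
def graphBoundary {V : Type*} [Fintype V] (G : SimpleGraph V) (S : Finset V) : Set (Sym2 V) :=
  {e ∈ G.edgeSet | ∃ u w : V, e = s(u, w) ∧ u ∈ S ∧ w ∉ S}

/-- The conductance of `G`: the minimum over all nonempty proper vertex subsets `S` of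
`|∂S| / min (vol S) (vol Sᶜ)`. -/
noncomputable def conductance {V : Type*} [Fintype V] [DecidableEq V] (G : SimpleGraph V) : ℝ :=
  sInf {x : ℝ | ∃ S : Finset V, S.Nonempty ∧ S ≠ Finset.univ ∧
    x = (graphBoundary G S).ncard /
      min ((graphVol G S : ℝ)) ((graphVol G Sᶜ : ℝ))}

/-- The normalized Laplacian matrix `𝓛(G) = I − D^{-1/2} A D^{-1/2}`. -/
noncomputable def normLap {V : Type*} [Fintype V] [DecidableEq V]
    (G : SimpleGraph V) [DecidableRel G.Adj] : Matrix V V ℝ :=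
  1 - (Matrix.diagonal fun v => (Real.sqrt (G.degree v))⁻¹) * (G.adjMatrix ℝ) *
    (Matrix.diagonal fun v => (Real.sqrt (G.degree v))⁻¹)

open Classical in
/-- The eigenvalues of a real symmetric matrix listed in increasing order
(with multiplicity), indexed by `Fin (Fintype.card V)`. -/
noncomputable def sortedEigs {V : Type*} [Fintype V] [DecidableEq V] (A : Matrix V V ℝ) :
    Fin (Fintype.card V) → ℝ :=
  if hA : A.IsHermitian then
    fun i => hA.eigenvalues₀ (Tuple.sort hA.eigenvalues₀ i)
  else 0

/-!
Combining eigenvectors for the two smallest eigenvalues of `𝓛` gives `x ⊥ D^{1/2} 𝟙` with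
`xᵀ 𝓛 x ≤ ν₂ ‖x‖²`; for `g = D^{-1/2} x` this reads `∑ d g = 0` and
`∑_{u ~ v} (g u - g v)² ≤ ν₂ ∑ d g²`. Shifting `g` by a weighted median and keeping its positive
or its negative part gives `h ≥ 0` with the same Rayleigh bound, supported on at most half of the
volume. Integrating over `t` the boundary and the volume of the superlevel sets `{h² ≥ t}` gives
`∑_{u ~ v} |h u² - h v²|` and `∑ d h²` (co-area), and Cauchy–Schwarz bounds the first by
`√(2 ν₂)` times the second, so some superlevel set `S` has `|∂S| ≤ √(2 ν₂) vol S`.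
-/

open Finset Matrix

namespace SimpleGraph

variable {V : Type*} [Fintype V] (G : SimpleGraph V) [DecidableRel G.Adj]

theorem sum_dart_eq_sum_adj {M : Type*} [AddCommMonoid M] (F : V → V → M) :
    ∑ d : G.Dart, F d.fst d.snd = ∑ u, ∑ v, if G.Adj u v then F u v else 0 := by
  rw [← Fintype.sum_prod_type', ← Finset.sum_filter]
  refine Finset.sum_bij (fun d _ => d.toProd) (fun d _ => by simp [d.adj])
    (fun d _ d' _ h => Dart.ext _ _ h) (fun p hp => ⟨⟨p, (mem_filter.1 hp).2⟩, mem_univ _, rfl⟩)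
    fun _ _ => rfl

theorem sum_dart_symm {M : Type*} [AddCommMonoid M] (F : G.Dart → M) :
    ∑ d : G.Dart, F d.symm = ∑ d : G.Dart, F d :=
  Equiv.sum_comp (Dart.symm_involutive.toPerm _) F

theorem sum_dart_fst {M : Type*} [AddCommMonoid M] (f : V → M) :
    ∑ d : G.Dart, f d.fst = ∑ v, G.degree v • f v := by
  classical
  rw [← Finset.sum_fiberwise univ (fun d : G.Dart => d.fst)]
  refine Finset.sum_congr rfl fun v _ => ?_
  rw [Finset.sum_congr rfl fun d hd => by rw [(Finset.mem_filter.1 hd).2], Finset.sum_const]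
  congr 1
  convert G.dart_fst_fiber_card_eq_degree v

theorem sum_dart_snd {M : Type*} [AddCommMonoid M] (f : V → M) :
    ∑ d : G.Dart, f d.snd = ∑ v, G.degree v • f v := by
  rw [← sum_dart_fst, ← G.sum_dart_symm]
  rfl

end SimpleGraph

section GraphQuantities

open SimpleGraph

variable {V : Type*} [Fintype V] (G : SimpleGraph V)

theorem graphVol_eq_sum_degree [DecidableRel G.Adj] (S : Finset V) :
    graphVol G S = ∑ v ∈ S, G.degree v := by
  simp only [graphVol, Set.ncard_eq_toFinset_card', Set.toFinset_card, G.card_neighborSet_eq_degree]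

theorem graphVol_mono {S T : Finset V} (h : S ⊆ T) : graphVol G S ≤ graphVol G T :=
  sum_le_sum_of_subset h

theorem graphVol_pos [DecidableRel G.Adj] (hdeg : ∀ v, 0 < G.degree v) {S : Finset V}
    (hS : S.Nonempty) : 0 < graphVol G S := by
  rw [graphVol_eq_sum_degree]
  exact sum_pos (fun v _ => hdeg v) hS

theorem graphVol_add_graphVol_compl [DecidableEq V] (S : Finset V) :
    graphVol G S + graphVol G Sᶜ = graphVol G univ :=
  sum_add_sum_compl S _

theorem ncard_graphBoundary [DecidableRel G.Adj] [DecidableEq V] (S : Finset V) :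
    (graphBoundary G S).ncard = #{d : G.Dart | d.fst ∈ S ∧ d.snd ∉ S} := by
  have himage : graphBoundary G S =
      ↑((univ.filter fun d : G.Dart => d.fst ∈ S ∧ d.snd ∉ S).image Dart.edge) := by
    ext e
    simp only [graphBoundary, coe_image, coe_filter, mem_univ, true_and, Set.mem_image]
    constructor
    · rintro ⟨he, u, w, rfl, hu, hw⟩
      exact ⟨⟨(u, w), he⟩, ⟨hu, hw⟩, rfl⟩
    · rintro ⟨d, ⟨hu, hw⟩, rfl⟩
      exact ⟨d.edge_mem, d.fst, d.snd, rfl, hu, hw⟩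
  rw [himage, Set.ncard_coe_finset]
  refine card_image_of_injOn fun d hd d' hd' h => ?_
  obtain h | rfl := (SimpleGraph.dart_edge_eq_iff d d').1 h
  · exact h
  · exact absurd (mem_filter.1 hd).2.1 (mem_filter.1 hd').2.2

theorem conductance_le_of_boundary_le [DecidableEq V] {S : Finset V} {C : ℝ}
    (hpos : 0 < graphVol G S) (hhalf : 2 * graphVol G S ≤ graphVol G univ)
    (hC : ((graphBoundary G S).ncard : ℝ) ≤ C * graphVol G S) : conductance G ≤ C := by
  have hS : S.Nonempty := nonempty_of_sum_ne_zero hpos.ne'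
  have hSc : S ≠ univ := by
    rintro rfl
    omega
  have hmin : min (graphVol G S : ℝ) (graphVol G Sᶜ) = graphVol G S := by
    have := graphVol_add_graphVol_compl G S
    exact min_eq_left (by exact_mod_cast (by omega : graphVol G S ≤ graphVol G Sᶜ))
  unfold conductance
  refine csInf_le_of_le ?_ ⟨S, hS, hSc, rfl⟩ ?_
  · refine ⟨0, ?_⟩
    rintro x ⟨T, -, -, rfl⟩
    positivity
  · rwa [hmin, div_le_iff₀ (by exact_mod_cast hpos)]

variable [DecidableRel G.Adj]

/-- Summed over darts, so every edge is counted twice. -/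
noncomputable def dirichletEnergy (f : V → ℝ) : ℝ :=
  ∑ d : G.Dart, (f d.fst - f d.snd) ^ 2

noncomputable def degreeNormSq (f : V → ℝ) : ℝ :=
  ∑ v, (G.degree v : ℝ) * f v ^ 2

theorem dirichletEnergy_nonneg (f : V → ℝ) : 0 ≤ dirichletEnergy G f :=
  sum_nonneg fun _ _ => sq_nonneg _

theorem degreeNormSq_nonneg (f : V → ℝ) : 0 ≤ degreeNormSq G f :=
  sum_nonneg fun _ _ => by positivity

end GraphQuantities

section Spectral

variable {n : Type*} [Fintype n] {A : Matrix n n ℝ}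

theorem exists_dotProduct_eq_zero_le_of_mulVec_eq_smul {u₁ u₂ : n → ℝ} {μ₁ μ₂ : ℝ}
    (h₁ : u₁ ⬝ᵥ u₁ = 1) (h₂ : u₂ ⬝ᵥ u₂ = 1) (h₁₂ : u₁ ⬝ᵥ u₂ = 0)
    (hA₁ : A *ᵥ u₁ = μ₁ • u₁) (hA₂ : A *ᵥ u₂ = μ₂ • u₂) (hμ : μ₁ ≤ μ₂) (w : n → ℝ) :
    ∃ x ≠ 0, w ⬝ᵥ x = 0 ∧ x ⬝ᵥ (A *ᵥ x) ≤ μ₂ * (x ⬝ᵥ x) := by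
  obtain ⟨a, b, hab, hw⟩ : ∃ a b : ℝ, 0 < a ^ 2 + b ^ 2 ∧ a * (w ⬝ᵥ u₁) + b * (w ⬝ᵥ u₂) = 0 := by
    by_cases hc : w ⬝ᵥ u₁ = 0
    · exact ⟨1, 0, by norm_num, by simp [hc]⟩
    · have := neg_ne_zero.2 hc
      exact ⟨w ⬝ᵥ u₂, -(w ⬝ᵥ u₁), by positivity, by ring⟩
  have h₂₁ : u₂ ⬝ᵥ u₁ = 0 := by rwa [dotProduct_comm]
  have hnorm : (a • u₁ + b • u₂) ⬝ᵥ (a • u₁ + b • u₂) = a ^ 2 + b ^ 2 := by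
    simp only [add_dotProduct, dotProduct_add, smul_dotProduct, dotProduct_smul, h₁, h₂, h₁₂, h₂₁,
      smul_eq_mul]
    ring
  have hform : (a • u₁ + b • u₂) ⬝ᵥ (A *ᵥ (a • u₁ + b • u₂)) = μ₁ * a ^ 2 + μ₂ * b ^ 2 := by
    simp only [mulVec_add, mulVec_smul, hA₁, hA₂, add_dotProduct, dotProduct_add, smul_dotProduct,
      dotProduct_smul, h₁, h₂, h₁₂, h₂₁, smul_eq_mul]
    ring
  refine ⟨a • u₁ + b • u₂, fun h0 => ?_, ?_, ?_⟩
  · rw [h0, zero_dotProduct] at hnorm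
    linarith
  · simpa only [dotProduct_add, dotProduct_smul, smul_eq_mul, mul_comm] using hw
  · rw [hform, hnorm]
    nlinarith [sq_nonneg a]

theorem Matrix.IsHermitian.exists_dotProduct_eq_zero_le_sortedEigs_one [DecidableEq n]
    (hA : A.IsHermitian) (hn : 2 ≤ Fintype.card n) (w : n → ℝ) :
    ∃ x ≠ 0, w ⬝ᵥ x = 0 ∧ x ⬝ᵥ (A *ᵥ x) ≤ sortedEigs A ⟨1, hn⟩ * (x ⬝ᵥ x) := by
  set e : Fin (Fintype.card n) ≃ n := Fintype.equivOfCardEq (Fintype.card_fin _)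
  set σ := Tuple.sort hA.eigenvalues₀
  have heig : ∀ k, hA.eigenvalues (e (σ k)) = hA.eigenvalues₀ (σ k) := fun k => by
    simp [Matrix.IsHermitian.eigenvalues, e]
  have horth : ∀ i j, (hA.eigenvectorBasis i : n → ℝ) ⬝ᵥ hA.eigenvectorBasis j =
      if i = j then 1 else 0 := fun i j => by
    rw [← orthonormal_iff_ite.1 hA.eigenvectorBasis.orthonormal i j,
      EuclideanSpace.inner_eq_star_dotProduct, star_trivial, dotProduct_comm]
  have hσ : σ ⟨0, by omega⟩ ≠ σ ⟨1, hn⟩ := σ.injective.ne (by simp [Fin.ext_iff])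
  have hsorted : sortedEigs A ⟨1, hn⟩ = hA.eigenvalues (e (σ ⟨1, hn⟩)) := by
    rw [heig, sortedEigs, dif_pos hA]
  rw [hsorted]
  refine exists_dotProduct_eq_zero_le_of_mulVec_eq_smul ((horth _ _).trans (if_pos rfl))
    ((horth _ _).trans (if_pos rfl)) ((horth _ _).trans (if_neg (e.injective.ne hσ)))
    (hA.mulVec_eigenvectorBasis _) (hA.mulVec_eigenvectorBasis _) ?_ w
  rw [heig, heig]
  exact Tuple.monotone_sort hA.eigenvalues₀ (Fin.mk_le_mk.2 zero_le_one)

end Spectral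

section NormalizedLaplacian

variable {V : Type*} [Fintype V] [DecidableEq V] (G : SimpleGraph V) [DecidableRel G.Adj]

theorem isHermitian_normLap : (normLap G).IsHermitian := by
  refine isHermitian_one.sub ?_
  rw [IsHermitian, conjTranspose_eq_transpose_of_trivial, transpose_mul, transpose_mul,
    diagonal_transpose, G.transpose_adjMatrix, Matrix.mul_assoc]

theorem normLap_eq_diagonal_mul_lapMatrix_mul_diagonal (hdeg : ∀ v, 0 < G.degree v) :
    normLap G = diagonal (fun v => (√(G.degree v))⁻¹) * G.lapMatrix ℝ *
      diagonal (fun v => (√(G.degree v))⁻¹) := by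
  have hone : diagonal (fun v => (√(G.degree v))⁻¹) * G.degMatrix ℝ *
      diagonal (fun v => (√(G.degree v))⁻¹) = 1 := by
    rw [SimpleGraph.degMatrix, diagonal_mul_diagonal, diagonal_mul_diagonal, ← diagonal_one]
    congr 1
    ext v
    have : (0 : ℝ) < G.degree v := Nat.cast_pos.2 (hdeg v)
    field_simp
    rw [Real.sq_sqrt this.le]
  rw [normLap, SimpleGraph.lapMatrix, Matrix.mul_sub, Matrix.sub_mul, hone]

theorem dotProduct_normLap_mulVec (hdeg : ∀ v, 0 < G.degree v) (x : V → ℝ) :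
    x ⬝ᵥ (normLap G *ᵥ x) = dirichletEnergy G (fun v => x v / √(G.degree v)) / 2 := by
  set g : V → ℝ := fun v => x v / √(G.degree v)
  have hleft : x ᵥ* diagonal (fun v => (√(G.degree v))⁻¹) = g := funext fun v => by
    rw [vecMul_diagonal]
    exact (div_eq_mul_inv _ _).symm
  have hright : diagonal (fun v => (√(G.degree v))⁻¹) *ᵥ x = g := funext fun v => by
    rw [mulVec_diagonal, mul_comm]
    exact (div_eq_mul_inv _ _).symm
  rw [normLap_eq_diagonal_mul_lapMatrix_mul_diagonal G hdeg, ← mulVec_mulVec, ← mulVec_mulVec,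
    dotProduct_mulVec, hleft, hright, ← toLinearMap₂'_apply', G.lapMatrix_toLinearMap₂' ℝ,
    dirichletEnergy, G.sum_dart_eq_sum_adj (fun u v => (g u - g v) ^ 2)]

theorem exists_dirichletEnergy_le_sortedEigs (hdeg : ∀ v, 0 < G.degree v)
    (hV : 2 ≤ Fintype.card V) :
    ∃ g : V → ℝ, ∑ v, (G.degree v : ℝ) * g v = 0 ∧ 0 < degreeNormSq G g ∧
      dirichletEnergy G g ≤ 2 * sortedEigs (normLap G) ⟨1, hV⟩ * degreeNormSq G g := by
  obtain ⟨x, hx0, hxw, hxle⟩ :=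
    (isHermitian_normLap G).exists_dotProduct_eq_zero_le_sortedEigs_one hV fun v => √(G.degree v)
  have hdeg' : ∀ v, (G.degree v : ℝ) ≠ 0 := fun v => Nat.cast_ne_zero.2 (hdeg v).ne'
  have hnorm : degreeNormSq G (fun v => x v / √(G.degree v)) = x ⬝ᵥ x := by
    refine sum_congr rfl fun v _ => ?_
    rw [div_pow, Real.sq_sqrt (Nat.cast_nonneg _), mul_div_cancel₀ _ (hdeg' v), sq]
  refine ⟨fun v => x v / √(G.degree v), ?_, ?_, ?_⟩
  · rw [← hxw]
    refine sum_congr rfl fun v _ => ?_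
    rw [← Real.mul_self_sqrt (Nat.cast_nonneg (G.degree v)), mul_assoc,
      mul_div_cancel₀ _ (Real.sqrt_ne_zero'.2 (Nat.cast_pos.2 (hdeg v)))]
  · rw [hnorm]
    exact (dotProduct_self_star_nonneg x).lt_of_ne fun h => hx0 (dotProduct_self_eq_zero.1 h.symm)
  · rw [hnorm]
    have := dotProduct_normLap_mulVec G hdeg x
    linarith

end NormalizedLaplacian

theorem posPart_sub_posPart_sq_add_negPart_sub_negPart_sq_le (x y : ℝ) :
    (x⁺ - y⁺) ^ 2 + (x⁻ - y⁻) ^ 2 ≤ (x - y) ^ 2 := by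
  rcases le_total 0 x with hx | hx <;> rcases le_total 0 y with hy | hy <;>
    simp only [posPart_eq_self.2, posPart_eq_zero.2, negPart_eq_neg.2, negPart_eq_zero.2, hx,
      hy] <;>
    nlinarith

theorem posPart_sq_add_negPart_sq (x : ℝ) : x⁺ ^ 2 + x⁻ ^ 2 = x ^ 2 := by
  rcases le_total 0 x with hx | hx <;>
    simp only [posPart_eq_self.2, posPart_eq_zero.2, negPart_eq_neg.2, negPart_eq_zero.2, hx] <;>
    ring

theorem exists_lt_and_le_mul_of_add_le_mul {a₁ a₂ b₁ b₂ c : ℝ} (ha₁ : 0 ≤ a₁) (ha₂ : 0 ≤ a₂)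
    (hb₁ : 0 ≤ b₁) (hb₂ : 0 ≤ b₂) (hb : 0 < b₁ + b₂) (h : a₁ + a₂ ≤ c * (b₁ + b₂)) :
    (0 < b₁ ∧ a₁ ≤ c * b₁) ∨ (0 < b₂ ∧ a₂ ≤ c * b₂) := by
  by_contra! hne
  rcases hb₁.eq_or_lt with rfl | hb₁ <;> rcases hb₂.eq_or_lt with rfl | hb₂
  · simp at hb
  · linarith [hne.2 hb₂]
  · linarith [hne.1 hb₁]
  · linarith [hne.1 hb₁, hne.2 hb₂]

theorem exists_weighted_median {V : Type*} [Fintype V] (w : V → ℕ) (f : V → ℝ) :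
    ∃ m : ℝ, 2 * ∑ v with m < f v, w v ≤ ∑ v, w v ∧ 2 * ∑ v with f v < m, w v ≤ ∑ v, w v := by
  classical
  cases isEmpty_or_nonempty V
  · exact ⟨0, by simp, by simp⟩
  set T : Finset V := {x | ∑ v, w v ≤ 2 * ∑ v with f v ≤ f x, w v}
  obtain ⟨xmax, -, hxmax⟩ := exists_max_image univ f univ_nonempty
  have hT : T.Nonempty :=
    ⟨xmax, by simp [T, filter_true_of_mem fun v _ => hxmax v (mem_univ v)]; omega⟩
  obtain ⟨x, hxT, hxmin⟩ := exists_min_image T f hT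
  have hx := (mem_filter.1 hxT).2
  refine ⟨f x, ?_, ?_⟩
  · have := sum_filter_add_sum_filter_not univ (fun v => f v ≤ f x) w
    simp only [not_le] at this
    omega
  · rcases (univ.filter fun v => f v < f x).eq_empty_or_nonempty with hempty | hne
    · simp [hempty]
    obtain ⟨y, hy, hymax⟩ := exists_max_image _ f hne
    have hyT : y ∉ T := fun hyT => (hxmin y hyT).not_gt (mem_filter.1 hy).2
    have hsub : (univ.filter fun v => f v < f x) ⊆ univ.filter fun v => f v ≤ f y :=
      fun v hv => mem_filter.2 ⟨mem_univ v, hymax v hv⟩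
    have := sum_le_sum_of_subset (f := w) hsub
    simp only [T, mem_filter, mem_univ, true_and, not_le] at hyT
    omega

section Splitting

variable {V : Type*} [Fintype V] (G : SimpleGraph V) [DecidableRel G.Adj]

theorem dirichletEnergy_sub_const (f : V → ℝ) (c : ℝ) :
    dirichletEnergy G (fun v => f v - c) = dirichletEnergy G f := by
  simp only [dirichletEnergy, sub_sub_sub_cancel_right]

theorem degreeNormSq_le_sub_const {f : V → ℝ} (hf : ∑ v, (G.degree v : ℝ) * f v = 0) (c : ℝ) :
    degreeNormSq G f ≤ degreeNormSq G (fun v => f v - c) := by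
  have hexpand : degreeNormSq G (fun v => f v - c) =
      degreeNormSq G f - 2 * c * ∑ v, (G.degree v : ℝ) * f v + c ^ 2 * ∑ v, (G.degree v : ℝ) := by
    simp only [degreeNormSq, mul_sum, ← sum_sub_distrib, ← sum_add_distrib]
    exact sum_congr rfl fun v _ => by ring
  rw [hexpand, hf]
  have : 0 ≤ c ^ 2 * ∑ v, (G.degree v : ℝ) := by positivity
  linarith

theorem dirichletEnergy_posPart_add_dirichletEnergy_negPart_le (f : V → ℝ) :
    dirichletEnergy G (fun v => (f v)⁺) + dirichletEnergy G (fun v => (f v)⁻) ≤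
      dirichletEnergy G f := by
  rw [dirichletEnergy, dirichletEnergy, ← sum_add_distrib]
  exact sum_le_sum fun d _ => posPart_sub_posPart_sq_add_negPart_sub_negPart_sq_le _ _

theorem degreeNormSq_posPart_add_degreeNormSq_negPart (f : V → ℝ) :
    degreeNormSq G (fun v => (f v)⁺) + degreeNormSq G (fun v => (f v)⁻) = degreeNormSq G f := by
  rw [degreeNormSq, degreeNormSq, ← sum_add_distrib]
  exact sum_congr rfl fun v _ => by rw [← mul_add, posPart_sq_add_negPart_sq]

theorem exists_nonneg_dirichletEnergy_le_of_sum_eq_zero {g : V → ℝ} {c : ℝ}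
    (horth : ∑ v, (G.degree v : ℝ) * g v = 0) (hpos : 0 < degreeNormSq G g)
    (hle : dirichletEnergy G g ≤ c * degreeNormSq G g) :
    ∃ h : V → ℝ, (∀ v, 0 ≤ h v) ∧ 0 < degreeNormSq G h ∧
      dirichletEnergy G h ≤ c * degreeNormSq G h ∧
      2 * graphVol G {v | 0 < h v} ≤ graphVol G univ := by
  obtain ⟨m, hup, hdown⟩ := exists_weighted_median (fun v => (G.neighborSet v).ncard) g
  set f : V → ℝ := fun v => g v - m
  have hc : 0 ≤ c := nonneg_of_mul_nonneg_left ((dirichletEnergy_nonneg G g).trans hle) hpos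
  have hD : degreeNormSq G g ≤ degreeNormSq G f := degreeNormSq_le_sub_const G horth m
  have hsplit := dirichletEnergy_posPart_add_dirichletEnergy_negPart_le G f
  rw [dirichletEnergy_sub_const] at hsplit
  rw [← degreeNormSq_posPart_add_degreeNormSq_negPart G f] at hD
  rcases exists_lt_and_le_mul_of_add_le_mul (dirichletEnergy_nonneg _ _)
    (dirichletEnergy_nonneg _ _) (degreeNormSq_nonneg _ _) (degreeNormSq_nonneg _ _)
    (hpos.trans_le hD) (hsplit.trans (hle.trans (mul_le_mul_of_nonneg_left hD hc))) with
    ⟨hpos', hle'⟩ | ⟨hpos', hle'⟩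
  · refine ⟨fun v => (f v)⁺, fun v => posPart_nonneg _, hpos', hle', ?_⟩
    simpa [f, graphVol] using hup
  · refine ⟨fun v => (f v)⁻, fun v => negPart_nonneg _, hpos', hle', ?_⟩
    simpa [f, graphVol] using hdown

end Splitting

section CoArea

open MeasureTheory Set

theorem integral_indicator_Iic_one {a M : ℝ} (ha : a ∈ Icc 0 M) :
    ∫ t in 0..M, (Iic a).indicator 1 t = a :=
  (intervalIntegral.integral_indicator (f := 1) ha).trans (by simp)

theorem intervalIntegrable_finsetSum {ι : Type*} (s : Finset ι) {φ : ι → ℝ → ℝ} {a b : ℝ}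
    (h : ∀ i ∈ s, IntervalIntegrable (φ i) volume a b) :
    IntervalIntegrable (fun t => ∑ i ∈ s, φ i t) volume a b := by
  simpa only [← Finset.sum_apply] using IntervalIntegrable.sum s h

theorem antitone_indicator_Iic_one (a : ℝ) : Antitone ((Iic a).indicator (1 : ℝ → ℝ)) :=
  fun s t hst => by
    by_cases ht : t ≤ a
    · simp [ht, hst.trans ht]
    · simp only [Set.mem_Iic, ht, not_false_eq_true, indicator_of_notMem]
      exact indicator_nonneg (fun _ _ => zero_le_one) _

variable {V : Type*} [Fintype V] (G : SimpleGraph V) [DecidableRel G.Adj]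

section Superlevel

variable {q : V → ℝ}

theorem graphVol_superlevelSet (t : ℝ) :
    (graphVol G {v | t ≤ q v} : ℝ) = ∑ v, (G.degree v : ℝ) * (Iic (q v)).indicator 1 t := by
  simp only [graphVol_eq_sum_degree, Nat.cast_sum, Finset.sum_filter, indicator_apply, Set.mem_Iic,
    Pi.one_apply, mul_ite, mul_one, mul_zero, Nat.cast_ite, Nat.cast_zero]

theorem intervalIntegrable_graphVol_superlevelSet (a b : ℝ) :
    IntervalIntegrable (fun t => (graphVol G {v | t ≤ q v} : ℝ)) volume a b := by
  simp only [graphVol_superlevelSet]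
  exact intervalIntegrable_finsetSum _ fun v _ =>
    (antitone_indicator_Iic_one _).intervalIntegrable.const_mul _

theorem integral_graphVol_superlevelSet {M : ℝ} (hq : ∀ v, q v ∈ Icc 0 M) :
    ∫ t in 0..M, (graphVol G {v | t ≤ q v} : ℝ) = ∑ v, (G.degree v : ℝ) * q v := by
  simp only [graphVol_superlevelSet]
  rw [intervalIntegral.integral_finsetSum fun v _ =>
    (antitone_indicator_Iic_one _).intervalIntegrable.const_mul _]
  refine Finset.sum_congr rfl fun v _ => ?_
  rw [intervalIntegral.integral_const_mul, integral_indicator_Iic_one (hq v)]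

variable [DecidableEq V]

theorem ncard_graphBoundary_superlevelSet (t : ℝ) :
    ((graphBoundary G {v | t ≤ q v}).ncard : ℝ) = ∑ d : G.Dart,
      ((Iic (q d.fst)).indicator 1 t - (Iic (min (q d.fst) (q d.snd))).indicator 1 t) := by
  rw [ncard_graphBoundary, Finset.card_filter, Nat.cast_sum]
  refine Finset.sum_congr rfl fun d _ => ?_
  simp only [indicator_apply, Set.mem_Iic, Pi.one_apply, Finset.mem_filter, Finset.mem_univ,
    true_and, le_min_iff]
  split_ifs <;> simp_all

theorem intervalIntegrable_ncard_graphBoundary_superlevelSet (a b : ℝ) :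
    IntervalIntegrable (fun t => ((graphBoundary G {v | t ≤ q v}).ncard : ℝ)) volume a b := by
  simp only [ncard_graphBoundary_superlevelSet]
  exact intervalIntegrable_finsetSum _ fun d _ =>
    (antitone_indicator_Iic_one _).intervalIntegrable.sub
      (antitone_indicator_Iic_one _).intervalIntegrable

theorem integral_ncard_graphBoundary_superlevelSet {M : ℝ} (hq : ∀ v, q v ∈ Icc 0 M) :
    ∫ t in 0..M, ((graphBoundary G {v | t ≤ q v}).ncard : ℝ) =
      ∑ d : G.Dart, (q d.fst - min (q d.fst) (q d.snd)) := by
  simp only [ncard_graphBoundary_superlevelSet]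
  rw [intervalIntegral.integral_finsetSum fun d _ =>
    (antitone_indicator_Iic_one _).intervalIntegrable.sub
      (antitone_indicator_Iic_one _).intervalIntegrable]
  refine Finset.sum_congr rfl fun d _ => ?_
  rw [intervalIntegral.integral_sub (antitone_indicator_Iic_one _).intervalIntegrable
    (antitone_indicator_Iic_one _).intervalIntegrable, integral_indicator_Iic_one (hq _),
    integral_indicator_Iic_one ⟨le_min (hq _).1 (hq _).1, (min_le_left _ _).trans (hq _).2⟩]

end Superlevel

theorem exists_superlevelSet_boundary_le {q : V → ℝ} (hq : ∀ v, 0 ≤ q v) (hq0 : ∃ v, q v ≠ 0)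
    {C : ℝ} (hC : ∑ d : G.Dart, (q d.fst - min (q d.fst) (q d.snd)) ≤
      C * ∑ v, (G.degree v : ℝ) * q v) :
    ∃ S : Finset V, S.Nonempty ∧ (∀ v ∈ S, 0 < q v) ∧
      ((graphBoundary G S).ncard : ℝ) ≤ C * graphVol G S := by
  classical
  obtain ⟨v₀, hv₀⟩ := hq0
  obtain ⟨x, -, hx⟩ := Finset.exists_max_image Finset.univ q ⟨v₀, Finset.mem_univ _⟩
  have hM : 0 < q x := ((hq v₀).lt_of_ne' hv₀).trans_le (hx v₀ (Finset.mem_univ _))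
  have hrange : ∀ v, q v ∈ Icc 0 (q x) := fun v => ⟨hq v, hx v (Finset.mem_univ _)⟩
  by_contra! hcon
  have hpos : ∀ t ∈ Ioo 0 (q x), 0 <
      ((graphBoundary G {v | t ≤ q v}).ncard : ℝ) - C * graphVol G {v | t ≤ q v} :=
    fun t ht => sub_pos.2 <| hcon _ ⟨x, by simp [ht.2.le]⟩ fun v hv =>
      ht.1.trans_le (Finset.mem_filter.1 hv).2
  have hint := intervalIntegral.intervalIntegral_pos_of_pos_on
    ((intervalIntegrable_ncard_graphBoundary_superlevelSet G 0 (q x)).sub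
      ((intervalIntegrable_graphVol_superlevelSet G 0 (q x)).const_mul C)) hpos hM
  rw [intervalIntegral.integral_sub (intervalIntegrable_ncard_graphBoundary_superlevelSet G _ _)
    ((intervalIntegrable_graphVol_superlevelSet G _ _).const_mul C),
    intervalIntegral.integral_const_mul, integral_ncard_graphBoundary_superlevelSet G hrange,
    integral_graphVol_superlevelSet G hrange] at hint
  linarith

end CoArea

section CauchySchwarz

variable {V : Type*} [Fintype V] (G : SimpleGraph V) [DecidableRel G.Adj]

theorem two_mul_sum_dart_sub_min (q : V → ℝ) :
    2 * ∑ d : G.Dart, (q d.fst - min (q d.fst) (q d.snd)) = ∑ d : G.Dart, |q d.fst - q d.snd| := by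
  rw [two_mul]
  nth_rw 2 [← G.sum_dart_symm]
  rw [← Finset.sum_add_distrib]
  refine Finset.sum_congr rfl fun d _ => ?_
  change q d.fst - min (q d.fst) (q d.snd) + (q d.snd - min (q d.snd) (q d.fst)) = _
  rcases le_total (q d.fst) (q d.snd) with h | h
  · rw [min_eq_left h, min_eq_right h, abs_of_nonpos (sub_nonpos.2 h)]
    ring
  · rw [min_eq_right h, min_eq_left h, abs_of_nonneg (sub_nonneg.2 h)]
    ring

theorem sum_dart_abs_sq_sub_sq_le (h : V → ℝ) :
    ∑ d : G.Dart, |h d.fst ^ 2 - h d.snd ^ 2| ≤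
      2 * (√(dirichletEnergy G h) * √(degreeNormSq G h)) := by
  have hplus : ∑ d : G.Dart, (h d.fst + h d.snd) ^ 2 ≤ 4 * degreeNormSq G h := by
    calc ∑ d : G.Dart, (h d.fst + h d.snd) ^ 2
        ≤ ∑ d : G.Dart, (2 * h d.fst ^ 2 + 2 * h d.snd ^ 2) :=
          Finset.sum_le_sum fun d _ => by nlinarith [sq_nonneg (h d.fst - h d.snd)]
      _ = 4 * degreeNormSq G h := by
          rw [Finset.sum_add_distrib, ← Finset.mul_sum, ← Finset.mul_sum,
            G.sum_dart_fst (fun v => h v ^ 2), G.sum_dart_snd (fun v => h v ^ 2), degreeNormSq]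
          simp only [nsmul_eq_mul]
          ring
  have hcs : (∑ d : G.Dart, |h d.fst ^ 2 - h d.snd ^ 2|) ^ 2 ≤
      dirichletEnergy G h * (4 * degreeNormSq G h) := by
    refine (Finset.sum_sq_le_sum_mul_sum_of_sq_le_mul _ (fun _ _ => sq_nonneg _)
      (fun _ _ => sq_nonneg _) fun d _ => ?_).trans
      (mul_le_mul_of_nonneg_left hplus (dirichletEnergy_nonneg G h))
    rw [sq_abs]
    exact le_of_eq (by ring)
  calc ∑ d : G.Dart, |h d.fst ^ 2 - h d.snd ^ 2|
      ≤ √(dirichletEnergy G h * (4 * degreeNormSq G h)) := Real.le_sqrt_of_sq_le hcs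
    _ = 2 * (√(dirichletEnergy G h) * √(degreeNormSq G h)) := by
      rw [Real.sqrt_mul (dirichletEnergy_nonneg G h), Real.sqrt_mul (by norm_num),
        show √(4 : ℝ) = 2 by norm_num]
      ring

theorem sum_dart_sq_sub_min_le {h : V → ℝ} {c : ℝ}
    (hle : dirichletEnergy G h ≤ c * degreeNormSq G h) :
    ∑ d : G.Dart, (h d.fst ^ 2 - min (h d.fst ^ 2) (h d.snd ^ 2)) ≤
      √c * degreeNormSq G h := by
  have hD := degreeNormSq_nonneg G h
  have hsqrt : √(dirichletEnergy G h) ≤ √c * √(degreeNormSq G h) := by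
    rw [← Real.sqrt_mul' _ hD]
    exact Real.sqrt_le_sqrt hle
  have hbound : √(dirichletEnergy G h) * √(degreeNormSq G h) ≤ √c * degreeNormSq G h :=
    calc √(dirichletEnergy G h) * √(degreeNormSq G h)
        ≤ √c * √(degreeNormSq G h) * √(degreeNormSq G h) := by gcongr
      _ = √c * degreeNormSq G h := by rw [mul_assoc, Real.mul_self_sqrt hD]
  have := two_mul_sum_dart_sub_min G (fun v => h v ^ 2)
  have := sum_dart_abs_sq_sub_sq_le G h
  linarith

end CauchySchwarz

/-- Cheeger's inequality, upper bound: `Φ(G) ≤ √(2·ν₂)`, where `ν₂` is the second smallest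
eigenvalue of the normalized Laplacian of a connected graph on at least 2 vertices with all
degrees at least 1. -/
theorem cheeger_upper_bound
    {V : Type*} [Fintype V] [DecidableEq V]
    (G : SimpleGraph V) [DecidableRel G.Adj]
    (hV : 2 ≤ Fintype.card V)
    (hdeg : ∀ v : V, 1 ≤ G.degree v)
    (ν₂ : ℝ) (hν : ν₂ = sortedEigs (normLap G) ⟨1, by omega⟩) :
    conductance G ≤ Real.sqrt (2 * ν₂) := by
  obtain ⟨g, horth, hg_pos, hg_le⟩ := exists_dirichletEnergy_le_sortedEigs G hdeg hV
  rw [← hν] at hg_le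
  obtain ⟨h, h_nonneg, h_pos, h_le, h_half⟩ :=
    exists_nonneg_dirichletEnergy_le_of_sum_eq_zero G horth hg_pos hg_le
  have h_ne : ∃ v, h v ^ 2 ≠ 0 := by
    obtain ⟨v, -, hv⟩ := exists_ne_zero_of_sum_ne_zero h_pos.ne'
    exact ⟨v, right_ne_zero_of_mul hv⟩
  obtain ⟨S, hS, hS_supp, hS_le⟩ := exists_superlevelSet_boundary_le G (fun v => sq_nonneg (h v))
    h_ne (sum_dart_sq_sub_min_le G h_le)
  have hS_sub : S ⊆ ({v | 0 < h v} : Finset V) := fun v hv =>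
    mem_filter.2 ⟨mem_univ v, (h_nonneg v).lt_of_ne' (sq_pos_iff.1 (hS_supp v hv))⟩
  exact conductance_le_of_boundary_le G (graphVol_pos G hdeg hS)
    ((Nat.mul_le_mul_left 2 (graphVol_mono G hS_sub)).trans h_half) hS_le
end

section
/- Let G be a connected finite simple graph on a vertex set V with n ≥ 2 vertices, and let L(G) be its Laplacian matrix. Then for every initial vector x : V → ℝ, the consensus dynamics converge to the average value: exp(−t·L(G))x → x̄·𝟙 as t → +∞, where x̄ = (1/n)·∑_{v∈V} x(v) and 𝟙 is the all-ones vector. -/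
/-!
In an orthonormal eigenbasis of the positive semidefinite Laplacian, `exp(-tL)` multiplies the
component along an eigenvector of eigenvalue `μ` by `e^{-tμ}`: components with `μ > 0` die out
and the kernel of `L` is fixed. For a connected graph the kernel consists of the constant
vectors, so `x - x̄𝟙`, whose entries sum to zero, is orthogonal to it, and `exp(-tL)x → x̄𝟙`.
-/

open Matrix Filter Topology

section

attribute [local instance] Matrix.linftyOpNormedRing Matrix.linftyOpNormedAlgebra

variable {n 𝕜 : Type*} [Fintype n] [DecidableEq n] [RCLike 𝕜]

theorem Matrix.exp_mulVec_of_mulVec_eq_smul {A : Matrix n n 𝕜} {v : n → 𝕜} {μ : 𝕜}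
    (h : A *ᵥ v = μ • v) : NormedSpace.exp A *ᵥ v = NormedSpace.exp μ • v := by
  have hpow (k : ℕ) : A ^ k *ᵥ v = μ ^ k • v := by
    induction k with
    | zero => simp
    | succ k ih => rw [pow_succ', ← mulVec_mulVec, ih, mulVec_smul, h, smul_smul, ← pow_succ]
  have hA := (NormedSpace.exp_series_hasSum_exp' (𝕂 := 𝕜) A).map
    (mulVec.addMonoidHomLeft v) (Continuous.matrix_mulVec continuous_id continuous_const)
  have hμ := (NormedSpace.exp_series_hasSum_exp' (𝕂 := 𝕜) μ).smul_const v
  refine hA.unique (hμ.congr_fun fun k => ?_)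
  simp [mulVec.addMonoidHomLeft, smul_mulVec, hpow, smul_smul]

end

namespace Matrix.IsHermitian

variable {n : Type*} [Fintype n] [DecidableEq n] {A : Matrix n n ℝ}

theorem eq_sum_dotProduct_smul_eigenvectorBasis (hA : A.IsHermitian) (y : n → ℝ) :
    y = ∑ i, (⇑(hA.eigenvectorBasis i) ⬝ᵥ y) • ⇑(hA.eigenvectorBasis i) := by
  have h := congrArg WithLp.ofLp (hA.eigenvectorBasis.sum_repr' (WithLp.toLp 2 y))
  simp only [WithLp.ofLp_sum, WithLp.ofLp_smul, EuclideanSpace.inner_eq_star_dotProduct,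
    star_trivial] at h
  simpa only [dotProduct_comm] using h.symm

theorem exp_smul_mulVec (hA : A.IsHermitian) (s : ℝ) (y : n → ℝ) :
    NormedSpace.exp (s • A) *ᵥ y =
      ∑ i, (Real.exp (s * hA.eigenvalues i) * (⇑(hA.eigenvectorBasis i) ⬝ᵥ y)) •
        ⇑(hA.eigenvectorBasis i) := by
  conv_lhs => rw [hA.eq_sum_dotProduct_smul_eigenvectorBasis y]
  simp only [mulVec_sum, mulVec_smul]
  refine Finset.sum_congr rfl fun i _ => ?_
  rw [exp_mulVec_of_mulVec_eq_smul (by rw [smul_mulVec, hA.mulVec_eigenvectorBasis, smul_smul]),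
    ← Real.exp_eq_exp_ℝ, smul_smul, mul_comm]

end Matrix.IsHermitian

namespace Matrix.PosSemidef

variable {n : Type*} [Fintype n] [DecidableEq n] {A : Matrix n n ℝ}

theorem tendsto_exp_neg_smul_mulVec_zero (hA : A.PosSemidef) {y : n → ℝ}
    (hy : ∀ u, A *ᵥ u = 0 → u ⬝ᵥ y = 0) :
    Tendsto (fun t : ℝ => NormedSpace.exp ((-t) • A) *ᵥ y) atTop (𝓝 0) := by
  have hcoeff (i : n) : Tendsto (fun t : ℝ => Real.exp (-t * hA.1.eigenvalues i) *
      (⇑(hA.1.eigenvectorBasis i) ⬝ᵥ y)) atTop (𝓝 0) := by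
    rcases (hA.eigenvalues_nonneg i).eq_or_lt with hμ | hμ
    · have hker : A *ᵥ ⇑(hA.1.eigenvectorBasis i) = 0 := by
        rw [hA.1.mulVec_eigenvectorBasis, ← hμ, zero_smul]
      simp [hy _ hker]
    · have hdecay := Real.tendsto_exp_neg_atTop_nhds_zero.comp (tendsto_id.atTop_mul_const hμ)
      simpa only [zero_mul, Function.comp_def, id, neg_mul] using hdecay.mul_const (_ ⬝ᵥ y)
  simp_rw [hA.1.exp_smul_mulVec]
  simpa using tendsto_finsetSum Finset.univ fun i _ =>
    (hcoeff i).smul_const ⇑(hA.1.eigenvectorBasis i)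

theorem tendsto_exp_neg_smul_mulVec (hA : A.PosSemidef) {w y : n → ℝ} (hw : A *ᵥ w = 0)
    (hy : ∀ u, A *ᵥ u = 0 → u ⬝ᵥ y = 0) :
    Tendsto (fun t : ℝ => NormedSpace.exp ((-t) • A) *ᵥ (w + y)) atTop (𝓝 w) := by
  have hfix (t : ℝ) : NormedSpace.exp ((-t) • A) *ᵥ w = w := by
    simpa using exp_mulVec_of_mulVec_eq_smul (A := (-t) • A) (μ := (0 : ℝ))
      (by rw [smul_mulVec, hw, smul_zero, zero_smul])
  simpa only [mulVec_add, hfix, add_zero] using (hA.tendsto_exp_neg_smul_mulVec_zero hy).const_add w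

end Matrix.PosSemidef

namespace SimpleGraph

variable {V : Type*} [Fintype V] [DecidableEq V] {G : SimpleGraph V} [DecidableRel G.Adj]

theorem Connected.dotProduct_eq_zero_of_lapMatrix_mulVec_eq_zero (hG : G.Connected)
    {u y : V → ℝ} (hu : G.lapMatrix ℝ *ᵥ u = 0) (hy : ∑ v, y v = 0) : u ⬝ᵥ y = 0 := by
  obtain ⟨v₀⟩ := hG.nonempty
  have hconst (v : V) : u v = u v₀ :=
    (lapMatrix_mulVec_eq_zero_iff_forall_reachable G).mp hu v v₀ (hG v v₀)
  simp [dotProduct, hconst, ← Finset.mul_sum, hy]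

end SimpleGraph

theorem consensus_dynamics_tendsto_average_general
    {V : Type*} [Fintype V] [DecidableEq V]
    (G : SimpleGraph V) [DecidableRel G.Adj]
    (hconn : G.Connected)
    (x : V → ℝ) (xbar : ℝ) (hxbar : xbar = (∑ v : V, x v) / Fintype.card V) :
    Filter.Tendsto (fun t : ℝ => NormedSpace.exp ((-t) • G.lapMatrix ℝ) *ᵥ x)
      Filter.atTop (nhds fun _ => xbar) := by
  have hconst : G.lapMatrix ℝ *ᵥ (fun _ => xbar) = 0 :=
    G.lapMatrix_mulVec_eq_zero_iff_forall_reachable.mpr fun _ _ _ => rfl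
  have hmean : ∑ v, (x v - xbar) = 0 := by
    have : Nonempty V := hconn.nonempty
    simp [Finset.sum_sub_distrib, hxbar, mul_div_cancel₀]
  have hlim := (G.posSemidef_lapMatrix ℝ).tendsto_exp_neg_smul_mulVec (y := x - fun _ => xbar)
    hconst fun _ hu => hconn.dotProduct_eq_zero_of_lapMatrix_mulVec_eq_zero hu hmean
  rwa [add_sub_cancel] at hlim

/-- For a connected finite simple graph on at least 2 vertices, the consensus dynamics
`exp(−t·L(G))x` converge to the average-consensus vector `x̄·𝟙` as `t → +∞`. -/
theorem consensus_dynamics_tendsto_average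
    {V : Type*} [Fintype V] [DecidableEq V]
    (G : SimpleGraph V) [DecidableRel G.Adj]
    (hV : 2 ≤ Fintype.card V) (hconn : G.Connected)
    (x : V → ℝ) (xbar : ℝ) (hxbar : xbar = (∑ v : V, x v) / Fintype.card V) :
    Filter.Tendsto (fun t : ℝ => NormedSpace.exp ((-t) • G.lapMatrix ℝ) *ᵥ x)
      Filter.atTop (nhds fun _ => xbar) :=
  consensus_dynamics_tendsto_average_general G hconn x xbar hxbar
end
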